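/- Let n ≥ 1, let p_1,…,p_n, q : ℝ → ℝ be continuous, fix s ∈ [a,b] and y_0,…,y_{n-1} ∈ ℝ. If y : ℝ → ℝ is n times continuously differentiable on [s,b] and satisfies y^{(n)}(t) + Σ_{i=0}^{n-1} p_{n-i}(t) y^{(i)}(t) = q(t) for t ∈ [s,b] together with y^{(i)}(s) = y_i for i = 0,…,n-1, then φ := y^{(n)} satisfies the Volterra integral equation φ(t) = -∫_s^t [Σ_{i=0}^{n-1} p_{n-i}(t) (t-η)^{n-i-1}/(n-i-1)!] φ(η) dη + q(t) - Σ_{i=0}^{n-1} Σ_{k=0}^{n-i-1} y_{k+i} p_{n-i}(t) (t-s)^k / k! for all t ∈ [s,b]. -/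

import Mathlib

/-!
Taylor's formula with integral remainder, applied to `y⁽ⁱ⁾` at order `n - i - 1` around `s`,
writes `y⁽ⁱ⁾(t)` as a Taylor polynomial whose coefficients are the initial values `y_{k+i}`, plus
`∫_s^t (t-η)^{n-i-1}/(n-i-1)! · y⁽ⁿ⁾(η) dη`. Substituting these expressions for `i < n` into the
equation and collecting the integrals gives the Volterra equation for `φ = y⁽ⁿ⁾`.
-/

open MeasureTheory intervalIntegral Set

section IteratedDerivWithin

variable {𝕜 F : Type*} [NontriviallyNormedField 𝕜] [NormedAddCommGroup F] [NormedSpace 𝕜 F]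
  {f : 𝕜 → F} {s t : Set 𝕜} {x : 𝕜}

theorem iteratedDerivWithin_iteratedDerivWithin (k i : ℕ) :
    iteratedDerivWithin k (iteratedDerivWithin i f s) s = iteratedDerivWithin (k + i) f s := by
  have hi : iteratedDerivWithin i f s = (fun g : 𝕜 → F => derivWithin g s)^[i] f :=
    funext fun _ => iteratedDerivWithin_eq_iterate
  ext x
  rw [iteratedDerivWithin_eq_iterate, iteratedDerivWithin_eq_iterate, Function.iterate_add_apply,
    hi]

theorem ContDiffOn.iteratedDerivWithin {n m i : ℕ} (hf : ContDiffOn 𝕜 n f s)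
    (hs : UniqueDiffOn 𝕜 s) (hmn : m + i ≤ n) : ContDiffOn 𝕜 m (iteratedDerivWithin i f s) s := by
  induction i generalizing m with
  | zero => exact hf.of_le (by exact_mod_cast hmn)
  | succ i ih =>
    rw [iteratedDerivWithin_succ]
    exact (ih (m := m + 1) (by omega)).derivWithin hs le_rfl

theorem iteratedDerivWithin_subset {n : ℕ} (st : s ⊆ t) (hs : UniqueDiffOn 𝕜 s)
    (ht : UniqueDiffOn 𝕜 t) (hf : ContDiffOn 𝕜 n f t) (hx : x ∈ s) :
    iteratedDerivWithin n f s x = iteratedDerivWithin n f t x := by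
  simp only [iteratedDerivWithin_eq_iteratedFDerivWithin,
    iteratedFDerivWithin_subset st hs ht hf hx]

end IteratedDerivWithin

section Taylor

open Nat

variable {F : Type*} [NormedAddCommGroup F] [NormedSpace ℝ F] {a b t : ℝ}

theorem taylor_integral_remainder_Icc [CompleteSpace F] {f : ℝ → F} {m : ℕ}
    (hf : ContDiffOn ℝ (m + 1 : ℕ) f (Icc a b)) (ht : t ∈ Icc a b) :
    f t = taylorWithinEval f m (Icc a b) a t +
      ∫ η in a..t, ((t - η) ^ m / m !) • iteratedDerivWithin (m + 1) f (Icc a b) η := by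
  rcases ht.1.eq_or_lt with rfl | hat
  · simp
  have hab : a < b := hat.trans_le ht.2
  have hsub : Icc a t ⊆ Icc a b := Icc_subset_Icc_right ht.2
  have hderiv : ∀ k ≤ m + 1, EqOn (iteratedDerivWithin k f (Icc a t))
      (iteratedDerivWithin k f (Icc a b)) (Icc a t) := fun k hk x hx =>
    iteratedDerivWithin_subset hsub (uniqueDiffOn_Icc hat) (uniqueDiffOn_Icc hab)
      (hf.of_le (by exact_mod_cast hk)) hx
  have h := taylor_integral_remainder (hf.mono (uIcc_of_le hat.le ▸ hsub))
  rw [uIcc_of_le hat.le] at h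
  have htaylor : taylorWithinEval f m (Icc a t) a t = taylorWithinEval f m (Icc a b) a t := by
    simp only [taylor_within_apply]
    refine Finset.sum_congr rfl fun k hk => ?_
    rw [hderiv k (Finset.mem_range.1 hk).le (left_mem_Icc.2 hat.le)]
  have hintegral : ∫ η in a..t, ((t - η) ^ m / m !) • iteratedDerivWithin (m + 1) f (Icc a t) η =
      ∫ η in a..t, ((t - η) ^ m / m !) • iteratedDerivWithin (m + 1) f (Icc a b) η :=
    integral_congr fun η hη => by
      rw [uIcc_of_le hat.le] at hη
      simp only [hderiv (m + 1) le_rfl hη]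
  rw [← htaylor, ← hintegral, ← h, add_sub_cancel]

theorem iteratedDerivWithin_Icc_eq_sum_add_integral [CompleteSpace F] {y : ℝ → F} {n i : ℕ}
    (hy : ContDiffOn ℝ n y (Icc a b)) (hi : i < n) (ht : t ∈ Icc a b) :
    iteratedDerivWithin i y (Icc a b) t =
      ∑ k ∈ Finset.range (n - i), ((t - a) ^ k / k !) • iteratedDerivWithin (k + i) y (Icc a b) a +
      ∫ η in a..t,
        ((t - η) ^ (n - i - 1) / (n - i - 1)!) • iteratedDerivWithin n y (Icc a b) η := by
  obtain ⟨m, hm⟩ : ∃ m, n - i = m + 1 := ⟨n - i - 1, by omega⟩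
  rw [hm, Nat.add_sub_cancel]
  rcases ht.1.eq_or_lt with rfl | hat
  · simp [Finset.sum_range_succ']
  have hS : UniqueDiffOn ℝ (Icc a b) := uniqueDiffOn_Icc (hat.trans_le ht.2)
  rw [taylor_integral_remainder_Icc (hy.iteratedDerivWithin (m := m + 1) hS (by omega)) ht,
    taylor_within_apply, iteratedDerivWithin_iteratedDerivWithin, show m + 1 + i = n by omega]
  simp only [iteratedDerivWithin_iteratedDerivWithin, div_eq_inv_mul]

theorem intervalIntegrable_iteratedDerivWithin_Icc {f : ℝ → F} {n : ℕ}
    (hf : ContDiffOn ℝ n f (Icc a b)) (ht : t ∈ Icc a b) :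
    IntervalIntegrable (iteratedDerivWithin n f (Icc a b)) volume a t := by
  rcases ht.1.eq_or_lt with rfl | hat
  · exact IntervalIntegrable.refl
  refine ContinuousOn.intervalIntegrable ?_
  rw [uIcc_of_le hat.le]
  exact (hf.continuousOn_iteratedDerivWithin le_rfl (uniqueDiffOn_Icc (hat.trans_le ht.2))).mono
    (Icc_subset_Icc_right ht.2)

end Taylor

theorem linear_ivp_to_volterra
    (b : ℝ) (n : ℕ)
    (p : ℕ → ℝ → ℝ) (q : ℝ → ℝ)
    (s : ℝ)
    (y₀ : ℕ → ℝ) (y : ℝ → ℝ)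
    (hy : ContDiffOn ℝ n y (Set.Icc s b))
    (hode : ∀ t ∈ Set.Icc s b,
      iteratedDerivWithin n y (Set.Icc s b) t +
        ∑ i ∈ Finset.range n, p (n - i) t * iteratedDerivWithin i y (Set.Icc s b) t
        = q t)
    (hinit : ∀ i < n, iteratedDerivWithin i y (Set.Icc s b) s = y₀ i) :
    ∀ t ∈ Set.Icc s b,
      iteratedDerivWithin n y (Set.Icc s b) t =
        -(∫ η in s..t,
            (∑ i ∈ Finset.range n,
              p (n - i) t * (t - η) ^ (n - i - 1) / (n - i - 1).factorial) *
              iteratedDerivWithin n y (Set.Icc s b) η) +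
          q t -
          ∑ i ∈ Finset.range n, ∑ k ∈ Finset.range (n - i),
            y₀ (k + i) * p (n - i) t * (t - s) ^ k / k.factorial := by
  intro t ht
  set φ := iteratedDerivWithin n y (Icc s b)
  have hφ : IntervalIntegrable φ volume s t := intervalIntegrable_iteratedDerivWithin_Icc hy ht
  have hterm : ∀ i ∈ Finset.range n, p (n - i) t * iteratedDerivWithin i y (Icc s b) t =
      (∫ η in s..t, p (n - i) t * (t - η) ^ (n - i - 1) / (n - i - 1).factorial * φ η) +
        ∑ k ∈ Finset.range (n - i), y₀ (k + i) * p (n - i) t * (t - s) ^ k / k.factorial := by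
    intro i hi
    rw [Finset.mem_range] at hi
    rw [iteratedDerivWithin_Icc_eq_sum_add_integral hy hi ht, mul_add, add_comm,
      ← intervalIntegral.integral_const_mul, Finset.mul_sum]
    congr 1
    · refine integral_congr fun η _ => ?_
      simp only [smul_eq_mul]
      ring
    · refine Finset.sum_congr rfl fun k hk => ?_
      rw [hinit (k + i) (by have := Finset.mem_range.1 hk; omega), smul_eq_mul]
      ring
  have hsum := Finset.sum_congr rfl hterm
  rw [Finset.sum_add_distrib, ← integral_finsetSum fun i _ =>
    hφ.continuousOn_mul (by fun_prop)] at hsum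
  simp only [← Finset.sum_mul] at hsum
  linarith [hode t ht]
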